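/- Let F⁺ : (0, 1) → [0, 1] be the orientation-preserving Farey map, F⁺(x) := x/(1−x) for 0 < x < 1/2 and F⁺(x) := 2 − 1/x for 1/2 ≤ x < 1. Then the σ-finite Borel measure on (0, 1) with density x ↦ 1/(x(1−x)) with respect to Lebesgue measure is F⁺-invariant: for every Borel set A ⊆ (0, 1), the measure of (F⁺)^{-1}(A) equals the measure of A. -/

import Mathlib

open MeasureTheory

/-- The orientation-preserving Farey map: `F⁺(x) = x/(1−x)` for `x < 1/2` and
`F⁺(x) = 2 − 1/x` for `x ≥ 1/2`. -/
noncomputable def fareyPlusMap (x : ℝ) : ℝ :=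
  if x < 1 / 2 then x / (1 - x) else 2 - 1 / x

/-- The σ-finite measure on `(0, 1)` with density `x ↦ 1/(x(1−x))` w.r.t. Lebesgue
measure. -/
noncomputable def fareyPlusMeasure : Measure ℝ :=
  (volume.restrict (Set.Ioo (0 : ℝ) 1)).withDensity
    (fun x => ENNReal.ofReal (1 / (x * (1 - x))))

/-!
On `(0, 1)` the map `F⁺` has the two inverse branches `g₀ y = y/(1+y)` onto `(0, 1/2)` and
`g₁ y = 1/(2−y)` onto `(1/2, 1)`, so `(F⁺)⁻¹(A) ∩ (0, 1) = g₀(A) ⊔ g₁(A)` and, by the change of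
variables formula, invariance of a density `ρ` reduces to the transfer-operator identity
`|g₀'| ρ∘g₀ + |g₁'| ρ∘g₁ = ρ`. For `ρ(x) = 1/(x(1−x))` the two terms are `1/y` and `1/(1−y)`.
-/

open Set

section TwoBranches

variable {s : Set ℝ} {ρ : ℝ → ENNReal} {g₀ g₁ g₀' g₁' : ℝ → ℝ}

theorem aemeasurable_ofReal_abs_deriv {f f' : ℝ → ℝ} (hs : MeasurableSet s)
    (hf : ∀ y ∈ s, HasDerivWithinAt f (f' y) s y) :
    AEMeasurable (fun y => ENNReal.ofReal |f' y|) (volume.restrict s) := by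
  simpa only [ContinuousLinearMap.det_toSpanSingleton] using
    aemeasurable_ofReal_abs_det_fderivWithin volume hs fun y hy => (hf y hy).hasFDerivWithinAt

theorem setLIntegral_image_union_image_eq (hs : MeasurableSet s) (hρ : Measurable ρ)
    (hg₀ : ∀ y ∈ s, HasDerivWithinAt g₀ (g₀' y) s y)
    (hg₁ : ∀ y ∈ s, HasDerivWithinAt g₁ (g₁' y) s y)
    (hinj₀ : InjOn g₀ s) (hinj₁ : InjOn g₁ s) (hdisj : Disjoint (g₀ '' s) (g₁ '' s))
    (htransfer : ∀ y ∈ s,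
      ENNReal.ofReal |g₀' y| * ρ (g₀ y) + ENNReal.ofReal |g₁' y| * ρ (g₁ y) = ρ y) :
    ∫⁻ x in g₀ '' s ∪ g₁ '' s, ρ x = ∫⁻ y in s, ρ y := by
  have hmeas₁ : MeasurableSet (g₁ '' s) :=
    measurable_image_of_fderivWithin hs (fun y hy => (hg₁ y hy).hasFDerivWithinAt) hinj₁
  have hρg₀ : AEMeasurable (fun y => ρ (g₀ y)) (volume.restrict s) :=
    hρ.comp_aemeasurable <| ContinuousOn.aemeasurable
      (fun y hy => (hg₀ y hy).continuousWithinAt) hs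
  rw [lintegral_union hmeas₁ hdisj, lintegral_image_eq_lintegral_abs_deriv_mul hs hg₀ hinj₀,
    lintegral_image_eq_lintegral_abs_deriv_mul hs hg₁ hinj₁,
    ← lintegral_add_left' (f := fun y => ENNReal.ofReal |g₀' y| * ρ (g₀ y))
      ((aemeasurable_ofReal_abs_deriv hs hg₀).mul hρg₀)]
  exact setLIntegral_congr_fun hs htransfer

end TwoBranches

theorem measurable_fareyPlusMap : Measurable fareyPlusMap :=
  Measurable.ite (measurableSet_lt measurable_id measurable_const)
    (measurable_id.div (measurable_const.sub measurable_id))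
    (measurable_const.sub (measurable_const.div measurable_id))

theorem fareyPlusMeasure_apply {S : Set ℝ} (hS : MeasurableSet S) :
    fareyPlusMeasure S = ∫⁻ x in S ∩ Ioo 0 1, ENNReal.ofReal (1 / (x * (1 - x))) := by
  rw [fareyPlusMeasure, withDensity_apply _ hS, Measure.restrict_restrict hS]

noncomputable def fareyPlusInv₀ (y : ℝ) : ℝ := y / (1 + y)

noncomputable def fareyPlusInv₁ (y : ℝ) : ℝ := 1 / (2 - y)

theorem mapsTo_fareyPlusInv₀ : MapsTo fareyPlusInv₀ (Ioo 0 1) (Ioo 0 (1 / 2)) := by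
  rintro y ⟨hy₀, hy₁⟩
  refine ⟨by unfold fareyPlusInv₀; positivity, ?_⟩
  rw [fareyPlusInv₀, div_lt_iff₀ (by linarith)]
  linarith

theorem mapsTo_fareyPlusInv₁ : MapsTo fareyPlusInv₁ (Ioo 0 1) (Ioo (1 / 2) 1) := by
  rintro y ⟨hy₀, hy₁⟩
  rw [fareyPlusInv₁, mem_Ioo, div_lt_div_iff₀ (by norm_num) (by linarith),
    div_lt_one (by linarith)]
  constructor <;> linarith

theorem leftInvOn_fareyPlusInv₀ : LeftInvOn fareyPlusMap fareyPlusInv₀ (Ioo 0 1) := by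
  intro y hy
  have hy₁ : 1 + y ≠ 0 := by linarith [hy.1]
  rw [fareyPlusMap, if_pos (mapsTo_fareyPlusInv₀ hy).2, fareyPlusInv₀]
  field_simp
  ring

theorem leftInvOn_fareyPlusInv₁ : LeftInvOn fareyPlusMap fareyPlusInv₁ (Ioo 0 1) := by
  intro y hy
  rw [fareyPlusMap, if_neg (mapsTo_fareyPlusInv₁ hy).1.le.not_gt, fareyPlusInv₁]
  simp

theorem fareyPlusInv₀_fareyPlusMap {x : ℝ} (hx : x < 1 / 2) :
    fareyPlusInv₀ (fareyPlusMap x) = x := by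
  have hx₁ : 1 - x ≠ 0 := by linarith
  rw [fareyPlusMap, if_pos hx, fareyPlusInv₀]
  field_simp
  ring

theorem fareyPlusInv₁_fareyPlusMap {x : ℝ} (hx : 1 / 2 ≤ x) :
    fareyPlusInv₁ (fareyPlusMap x) = x := by
  rw [fareyPlusMap, if_neg hx.not_gt, fareyPlusInv₁]
  simp

theorem preimage_fareyPlusMap_inter_Ioo {A : Set ℝ} (hA : A ⊆ Ioo 0 1) :
    fareyPlusMap ⁻¹' A ∩ Ioo 0 1 = fareyPlusInv₀ '' A ∪ fareyPlusInv₁ '' A := by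
  apply Subset.antisymm
  · rintro x ⟨hxA, -⟩
    rcases lt_or_ge x (1 / 2) with hx | hx
    · exact Or.inl ⟨_, hxA, fareyPlusInv₀_fareyPlusMap hx⟩
    · exact Or.inr ⟨_, hxA, fareyPlusInv₁_fareyPlusMap hx⟩
  · rintro x (⟨y, hy, rfl⟩ | ⟨y, hy, rfl⟩)
    · refine ⟨?_, Ioo_subset_Ioo_right (by norm_num) (mapsTo_fareyPlusInv₀ (hA hy))⟩
      rwa [mem_preimage, leftInvOn_fareyPlusInv₀ (hA hy)]
    · refine ⟨?_, Ioo_subset_Ioo_left (by norm_num) (mapsTo_fareyPlusInv₁ (hA hy))⟩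
      rwa [mem_preimage, leftInvOn_fareyPlusInv₁ (hA hy)]

theorem hasDerivAt_fareyPlusInv₀ {y : ℝ} (hy : 1 + y ≠ 0) :
    HasDerivAt fareyPlusInv₀ (1 / (1 + y) ^ 2) y := by
  refine ((hasDerivAt_id' y).div ((hasDerivAt_id' y).const_add 1) hy).congr_deriv ?_
  field_simp
  ring

theorem hasDerivAt_fareyPlusInv₁ {y : ℝ} (hy : 2 - y ≠ 0) :
    HasDerivAt fareyPlusInv₁ (1 / (2 - y) ^ 2) y := by
  refine ((hasDerivAt_const y 1).div ((hasDerivAt_id' y).const_sub 2) hy).congr_deriv ?_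
  field_simp
  ring

theorem fareyPlus_transfer {y : ℝ} (hy : y ∈ Ioo 0 1) :
    ENNReal.ofReal |1 / (1 + y) ^ 2|
        * ENNReal.ofReal (1 / (fareyPlusInv₀ y * (1 - fareyPlusInv₀ y)))
      + ENNReal.ofReal |1 / (2 - y) ^ 2|
        * ENNReal.ofReal (1 / (fareyPlusInv₁ y * (1 - fareyPlusInv₁ y)))
      = ENNReal.ofReal (1 / (y * (1 - y))) := by
  obtain ⟨hy₀, hy₁⟩ := hy
  have : 1 + y ≠ 0 := by linarith
  have : 2 - y ≠ 0 := by linarith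
  have : 1 - y ≠ 0 := by linarith
  have h₀ : 1 / (1 + y) ^ 2 * (1 / (fareyPlusInv₀ y * (1 - fareyPlusInv₀ y))) = 1 / y := by
    rw [fareyPlusInv₀]
    field_simp
    ring
  have h₁ : 1 / (2 - y) ^ 2 * (1 / (fareyPlusInv₁ y * (1 - fareyPlusInv₁ y))) = 1 / (1 - y) := by
    have h : 1 - 1 / (2 - y) = (1 - y) / (2 - y) := by field_simp; ring
    rw [fareyPlusInv₁, h]
    field_simp
  rw [abs_of_nonneg (by positivity), abs_of_nonneg (by positivity),
    ← ENNReal.ofReal_mul (by positivity), ← ENNReal.ofReal_mul (by positivity), h₀, h₁,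
    ← ENNReal.ofReal_add (by positivity) (one_div_pos.2 (sub_pos.2 hy₁)).le]
  congr 1
  field_simp
  ring

/-- The σ-finite Borel measure on `(0, 1)` with density `1/(x(1−x))`
w.r.t. Lebesgue measure is invariant for the orientation-preserving Farey map `F⁺`: for
every Borel set `A ⊆ (0, 1)`, the measure of `(F⁺)⁻¹(A)` equals the measure of `A`. -/
theorem stmt_17 :
    ∀ A : Set ℝ, MeasurableSet A → A ⊆ Set.Ioo (0 : ℝ) 1 →
      fareyPlusMeasure (fareyPlusMap ⁻¹' A) = fareyPlusMeasure A := by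
  intro A hA hA1
  rw [fareyPlusMeasure_apply (measurable_fareyPlusMap hA), fareyPlusMeasure_apply hA,
    preimage_fareyPlusMap_inter_Ioo hA1, inter_eq_left.2 hA1]
  have hdisj : Disjoint (fareyPlusInv₀ '' A) (fareyPlusInv₁ '' A) :=
    (Ioo_disjoint_Ioo.2 (by norm_num)).mono
      (mapsTo_fareyPlusInv₀.mono_left hA1).image_subset
      (mapsTo_fareyPlusInv₁.mono_left hA1).image_subset
  refine setLIntegral_image_union_image_eq hA (by fun_prop)
    (fun y hy => (hasDerivAt_fareyPlusInv₀ (by linarith [(hA1 hy).1])).hasDerivWithinAt)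
    (fun y hy => (hasDerivAt_fareyPlusInv₁ (by linarith [(hA1 hy).2])).hasDerivWithinAt)
    (leftInvOn_fareyPlusInv₀.injOn.mono hA1) (leftInvOn_fareyPlusInv₁.injOn.mono hA1) hdisj
    fun y hy => fareyPlus_transfer (hA1 hy)
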